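/- Let Φ be positive-definite diagonal and Ω symmetric positive semi-definite with γ ≥ 0, and let θ̃^S = (I + γΦ⁻¹Ω)⁻¹ θ̂. Then the smoothness of the estimate does not exceed that of the input: (θ̃^S)ᵀ Ω θ̃^S ≤ θ̂ᵀ Ω θ̂. -/

import Mathlib

/-!
Inverting the smoother gives `θ = θS + w` with `w = γ Φ⁻¹ Ω θS`. Expanding,
`θᵀ Ω θ = θSᵀ Ω θS + 2 γ (Ω θS)ᵀ Φ⁻¹ (Ω θS) + wᵀ Ω w`, and both extra terms are nonnegative.
The smoother is invertible because `Φ (1 + γ Φ⁻¹ Ω) = Φ + γ Ω` is positive definite.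
-/

open Matrix

namespace Matrix

variable {n : Type*} [Fintype n]

section TrivialStar

variable {R : Type*} [CommRing R] [PartialOrder R] [StarRing R] [TrivialStar R]

theorem PosSemidef.dotProduct_mulVec_comm {Ω : Matrix n n R} (hΩ : Ω.PosSemidef) (x y : n → R) :
    x ⬝ᵥ Ω *ᵥ y = y ⬝ᵥ Ω *ᵥ x := by
  rw [← dotProduct_transpose_mulVec, ← conjTranspose_eq_transpose_of_trivial, hΩ.isHermitian.eq]

theorem PosSemidef.dotProduct_mulVec_self_nonneg {M : Matrix n n R} (hM : M.PosSemidef)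
    (x : n → R) : 0 ≤ x ⬝ᵥ M *ᵥ x := by
  simpa using hM.dotProduct_mulVec_nonneg x

theorem PosSemidef.dotProduct_mulVec_le_one_add_mul_mulVec [DecidableEq n] [IsOrderedRing R]
    {Ω P : Matrix n n R} (hΩ : Ω.PosSemidef) (hP : P.PosSemidef) (x : n → R) :
    x ⬝ᵥ Ω *ᵥ x ≤ ((1 + P * Ω) *ᵥ x) ⬝ᵥ Ω *ᵥ ((1 + P * Ω) *ᵥ x) := by
  set u := Ω *ᵥ x
  set w := P *ᵥ u
  have hw : (1 + P * Ω) *ᵥ x = x + w := by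
    rw [add_mulVec, one_mulVec, ← mulVec_mulVec]
  have hcross : x ⬝ᵥ Ω *ᵥ w = u ⬝ᵥ P *ᵥ u := by
    rw [hΩ.dotProduct_mulVec_comm, dotProduct_comm]
  have hexpand : (x + w) ⬝ᵥ Ω *ᵥ (x + w)
      = x ⬝ᵥ Ω *ᵥ x + 2 * (u ⬝ᵥ P *ᵥ u) + w ⬝ᵥ Ω *ᵥ w := by
    rw [mulVec_add, dotProduct_add, add_dotProduct, add_dotProduct,
      hΩ.dotProduct_mulVec_comm w x, hcross]
    ring
  rw [hw, hexpand]
  exact le_add_of_le_of_nonneg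
    (le_add_of_nonneg_right (mul_nonneg zero_le_two (hP.dotProduct_mulVec_self_nonneg u)))
    (hΩ.dotProduct_mulVec_self_nonneg w)

end TrivialStar

theorem PosDef.isUnit_one_add_inv_mul [DecidableEq n] {K : Type*} [Field K] [PartialOrder K]
    [StarRing K] [AddLeftMono K] {D S : Matrix n n K} (hD : D.PosDef) (hS : S.PosSemidef) :
    IsUnit (1 + D⁻¹ * S) := by
  have hfactor : 1 + D⁻¹ * S = D⁻¹ * (D + S) := by
    rw [Matrix.mul_add, Matrix.nonsing_inv_mul D ((isUnit_iff_isUnit_det D).mp hD.isUnit)]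
  rw [hfactor]
  exact hD.inv.isUnit.mul (hD.add_posSemidef hS).isUnit

end Matrix

theorem stmt18 {m : ℕ} (φ : Fin m → ℝ) (hφ : ∀ i, 0 < φ i)
    (Ω : Matrix (Fin m) (Fin m) ℝ) (hΩ : Ω.PosSemidef)
    (γ : ℝ) (hγ : 0 ≤ γ) (θ : Fin m → ℝ)
    (θS : Fin m → ℝ) (hθS : θS = (1 + γ • (Matrix.diagonal φ)⁻¹ * Ω)⁻¹ *ᵥ θ) :
    θS ⬝ᵥ (Ω *ᵥ θS) ≤ θ ⬝ᵥ (Ω *ᵥ θ) := by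
  set D := Matrix.diagonal φ
  have hD : D.PosDef := PosDef.diagonal hφ
  have hunit : IsUnit (1 + γ • D⁻¹ * Ω) := by
    rw [smul_mul, ← mul_smul_comm]
    exact hD.isUnit_one_add_inv_mul (hΩ.smul hγ)
  have hθ : θ = (1 + γ • D⁻¹ * Ω) *ᵥ θS := by
    rw [hθS, mulVec_mulVec, mul_nonsing_inv _ ((isUnit_iff_isUnit_det _).mp hunit), one_mulVec]
  rw [hθ]
  exact hΩ.dotProduct_mulVec_le_one_add_mul_mulVec (hD.inv.posSemidef.smul hγ) θS
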